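/- arXiv:2105.05007 — 3 statements merged into one kernel-verified Lean document; each statement's English description precedes it below -/
import Mathlib

section
/- If H is the K_1-corona of a finite simple graph G with d vertices, then every minimal dominating set of H has exactly d elements; in particular, H is domination-unmixed. -/
/-- `D` is a dominating set of the graph `G`: every vertex is in `D` or adjacent to a
vertex of `D`. -/
def IsDomSet {V : Type*} (G : SimpleGraph V) (D : Finset V) : Prop :=
  ∀ v : V, v ∈ D ∨ ∃ u ∈ D, G.Adj u v

/-- `D` is a minimal dominating set of `G`: it is dominating and properly contains no
dominating set. -/
def IsMinDomSet {V : Type*} (G : SimpleGraph V) (D : Finset V) : Prop :=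
  IsDomSet G D ∧ ∀ D' ⊆ D, IsDomSet G D' → D' = D

/-- The `K₁`-corona of `G`: add to `G` a pendant vertex (whisker) attached to each
vertex of `G`.  The original vertices are `Sum.inl i` and the whisker vertices are
`Sum.inr i`. -/
def corona {V : Type*} (G : SimpleGraph V) : SimpleGraph (V ⊕ V) where
  Adj a b :=
    (∃ i j, a = Sum.inl i ∧ b = Sum.inl j ∧ G.Adj i j) ∨
    (∃ i, a = Sum.inl i ∧ b = Sum.inr i) ∨
    (∃ i, a = Sum.inr i ∧ b = Sum.inl i)
  symm := by
    constructor
    rintro a b (⟨i, j, rfl, rfl, h⟩ | ⟨i, rfl, rfl⟩ | ⟨i, rfl, rfl⟩)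
    · exact Or.inl ⟨j, i, rfl, rfl, h.symm⟩
    · exact Or.inr (Or.inr ⟨i, rfl, rfl⟩)
    · exact Or.inr (Or.inl ⟨i, rfl, rfl⟩)
  loopless := by
    constructor
    rintro a (⟨i, j, rfl, h1, h⟩ | ⟨i, rfl, h1⟩ | ⟨i, rfl, h1⟩)
    · obtain rfl := Sum.inl_injective h1
      exact G.loopless.irrefl i h
    · exact Sum.inl_ne_inr h1
    · exact Sum.inr_ne_inl h1

/-- A graph is domination-unmixed if all of its minimal dominating sets have the same
size. -/
def DomUnmixed {V : Type*} (G : SimpleGraph V) : Prop :=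
  ∀ D D' : Finset V, IsMinDomSet G D → IsMinDomSet G D' → D.card = D'.card

/-!
To dominate the whisker `Y_i`, a dominating set of the corona must contain `X_i` or `Y_i`.
A minimal one cannot contain both: `Y_i` is pendant with neighbour `X_i`, so it could be dropped.
Hence a minimal dominating set picks exactly one of `X_i`, `Y_i` for each `i`.
-/

section CoronaDomination

variable {V : Type*}

section Corona

variable {G : SimpleGraph V} {i j : V}

@[simp]
theorem corona_adj_inl_inr : (corona G).Adj (.inl i) (.inr j) ↔ i = j := by
  simp [corona, eq_comm]

@[simp]
theorem corona_adj_inr_inl : (corona G).Adj (.inr i) (.inl j) ↔ i = j := by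
  simp [corona, eq_comm]

@[simp]
theorem corona_not_adj_inr_inr : ¬(corona G).Adj (.inr i) (.inr j) := by
  simp [corona]

end Corona

theorem IsDomSet.erase_of_pendant [DecidableEq V] {G : SimpleGraph V} {D : Finset V} {u v : V}
    (hD : IsDomSet G D) (hu : u ∈ D) (huv : G.Adj u v) (hpend : ∀ w, G.Adj v w → w = u) :
    IsDomSet G (D.erase v) := by
  intro w
  by_cases hwv : w = v
  · subst hwv
    exact Or.inr ⟨u, Finset.mem_erase.2 ⟨huv.ne, hu⟩, huv⟩
  rcases hD w with hw | ⟨x, hx, hxw⟩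
  · exact Or.inl (Finset.mem_erase.2 ⟨hwv, hw⟩)
  by_cases hxv : x = v
  · subst hxv
    obtain rfl := hpend w hxw
    exact Or.inl (Finset.mem_erase.2 ⟨hwv, hu⟩)
  · exact Or.inr ⟨x, Finset.mem_erase.2 ⟨hxv, hx⟩, hxw⟩

theorem Finset.card_eq_of_inl_mem_iff_inr_notMem [Fintype V] {D : Finset (V ⊕ V)}
    (hD : ∀ i, Sum.inl i ∈ D ↔ Sum.inr i ∉ D) : D.card = Fintype.card V := by
  classical
  have hinj : Set.InjOn (Sum.elim id id) (D : Set (V ⊕ V)) := by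
    rintro (a | a) ha (b | b) hb (rfl : a = b)
    · rfl
    · exact absurd hb ((hD a).1 ha)
    · exact absurd ha ((hD a).1 hb)
    · rfl
  have himage : D.image (Sum.elim id id) = Finset.univ := by
    refine Finset.eq_univ_iff_forall.2 fun i => Finset.mem_image.2 ?_
    by_cases hi : Sum.inl i ∈ D
    · exact ⟨_, hi, rfl⟩
    · exact ⟨_, not_not.1 (mt (hD i).2 hi), rfl⟩
  rw [← Finset.card_image_of_injOn hinj, himage, Finset.card_univ]

section MinimalDominatingSets

variable {G : SimpleGraph V} {D : Finset (V ⊕ V)}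

theorem IsDomSet.corona_inl_mem_or_inr_mem (hD : IsDomSet (corona G) D) (i : V) :
    Sum.inl i ∈ D ∨ Sum.inr i ∈ D := by
  rcases hD (.inr i) with h | ⟨(u | u), hu, hadj⟩
  · exact .inr h
  · obtain rfl : u = i := corona_adj_inl_inr.1 hadj
    exact .inl hu
  · exact absurd hadj corona_not_adj_inr_inr

theorem IsMinDomSet.corona_inl_mem_iff_inr_notMem (hD : IsMinDomSet (corona G) D) (i : V) :
    Sum.inl i ∈ D ↔ Sum.inr i ∉ D := by
  classical
  refine ⟨fun hl hr => ?_, (hD.1.corona_inl_mem_or_inr_mem i).resolve_right⟩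
  have hpend : ∀ w, (corona G).Adj (.inr i) w → w = .inl i := by
    rintro (w | w) hw
    · rw [corona_adj_inr_inl.1 hw]
    · exact absurd hw corona_not_adj_inr_inr
  have herase := hD.2 _ (D.erase_subset _)
    (hD.1.erase_of_pendant hl (corona_adj_inl_inr.2 rfl) hpend)
  exact D.notMem_erase (.inr i) (herase.symm ▸ hr)

end MinimalDominatingSets

end CoronaDomination

/-- Every minimal dominating set of the `K₁`-corona of a graph `G` with `d` vertices
has exactly `d` elements; in particular the corona is domination-unmixed. -/
theorem stmt7 {V : Type*} [Fintype V] (G : SimpleGraph V) :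
    (∀ D : Finset (V ⊕ V), IsMinDomSet (corona G) D → D.card = Fintype.card V) ∧
    DomUnmixed (corona G) := by
  have hcard : ∀ D : Finset (V ⊕ V), IsMinDomSet (corona G) D → D.card = Fintype.card V :=
    fun _ hD => Finset.card_eq_of_inl_mem_iff_inr_notMem hD.corona_inl_mem_iff_inr_notMem
  exact ⟨hcard, fun D D' hD hD' => (hcard D hD).trans (hcard D' hD').symm⟩
end

section
/- If H is the K_1-corona of a finite simple graph G with vertex set {X_1,...,X_d}, then the closed neighborhood ideal N_H is a complete intersection: it is generated by the regular sequence X_1Y_1, X_2Y_2, ..., X_dY_d in K[X_1,...,X_d,Y_1,...,Y_d]. -/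
open scoped Classical in
/-- The closed neighborhood ideal of a finite simple graph `G`, generated in
`K[X_v : v ∈ V]` by the products of the variables in the closed neighborhoods of the
vertices. -/
noncomputable def nbhdIdeal {V : Type*} [Fintype V] (K : Type*) [Field K]
    (G : SimpleGraph V) : Ideal (MvPolynomial V K) :=
  Ideal.span { m | ∃ i : V,
    m = ∏ j ∈ (insert i {j | G.Adj i j} : Set V).toFinset, MvPolynomial.X j }

/-- `rs` is a regular sequence in `R`: it generates a proper ideal and each entry is a
nonzerodivisor modulo the ideal generated by the preceding entries. -/
def IsRegSeq {R : Type*} [CommRing R] (rs : List R) : Prop :=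
  Ideal.span {x | x ∈ rs} ≠ ⊤ ∧
  ∀ i : Fin rs.length, ∀ y : R,
    rs.get i * y ∈ Ideal.span {x | x ∈ rs.take i.1} →
      y ∈ Ideal.span {x | x ∈ rs.take i.1}

/-!
The generators `XᵢYᵢ` are monomials with pairwise disjoint supports. Membership in a monomial
ideal is decided exponent by exponent, and a monomial sharing no variable with the generators
cannot help an exponent dominate one of them; hence each `XᵢYᵢ` is a nonzerodivisor modulo the
earlier ones. For the ideal itself: the closed neighbourhood of the whisker `Yᵢ` is `{Xᵢ, Yᵢ}`,
and every other closed neighbourhood `N(Xᵢ)` contains both `Xᵢ` and `Yᵢ`.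
-/

open MvPolynomial Function

theorem setOf_mem_take_map_finRange {R : Type*} {d : ℕ} (f : Fin d → R) (k : ℕ) :
    {x | x ∈ ((List.finRange d).map f).take k} = f '' {j | (j : ℕ) < k} := by
  ext x
  simp only [Set.mem_ofPred_eq, ← List.map_take, List.mem_map, Set.mem_image,
    List.mem_take_iff_getElem]
  constructor
  · rintro ⟨j, ⟨m, hm, rfl⟩, rfl⟩
    exact ⟨_, by simpa using lt_of_lt_of_le hm (min_le_left _ _), rfl⟩
  · rintro ⟨j, hj, rfl⟩
    exact ⟨j, ⟨j, by simp [hj], by simp⟩, rfl⟩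

theorem setOf_mem_map_finRange {R : Type*} {d : ℕ} (f : Fin d → R) :
    {x | x ∈ (List.finRange d).map f} = Set.range f := by
  ext x
  simp

theorem isRegSeq_map_finRange {R : Type*} [CommRing R] {d : ℕ} (f : Fin d → R)
    (hne : Ideal.span (Set.range f) ≠ ⊤)
    (hreg : ∀ i y, f i * y ∈ Ideal.span (f '' Set.Iio i) → y ∈ Ideal.span (f '' Set.Iio i)) :
    IsRegSeq ((List.finRange d).map f) := by
  refine ⟨by rwa [setOf_mem_map_finRange], fun i y hy => ?_⟩
  have hi : (i : ℕ) < d := by simpa using i.2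
  have hIio : {j : Fin d | (j : ℕ) < i} = Set.Iio ⟨i, hi⟩ := rfl
  have hget : ((List.finRange d).map f).get i = f ⟨i, hi⟩ := by simp
  rw [setOf_mem_take_map_finRange, hIio] at hy ⊢
  exact hreg _ _ (hget ▸ hy)

theorem Finsupp.le_of_le_add_of_disjoint {σ : Type*} {s x e : σ →₀ ℕ}
    (hdisj : Disjoint s.support e.support) (h : s ≤ x + e) : s ≤ x := by
  intro a
  by_cases ha : a ∈ e.support
  · simp [Finsupp.notMem_support_iff.1 (Finset.disjoint_right.1 hdisj ha)]
  · simpa [Finsupp.notMem_support_iff.1 ha] using h a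

namespace MvPolynomial

variable {σ R : Type*} [CommSemiring R]

theorem span_monomial_image_ne_top [Nontrivial R] {S : Set (σ →₀ ℕ)} (hS : 0 ∉ S) :
    Ideal.span ((fun s => monomial s (1 : R)) '' S) ≠ ⊤ := by
  rw [Ne, Ideal.eq_top_iff_one, ← C_1, mem_ideal_span_monomial_image]
  intro h
  obtain ⟨s, hs, hle⟩ := h 0 (by simp)
  exact hS (nonpos_iff_eq_zero.1 hle ▸ hs)

theorem mem_span_monomial_image_of_monomial_mul_mem {S : Set (σ →₀ ℕ)} {e : σ →₀ ℕ}
    (hdisj : ∀ s ∈ S, Disjoint s.support e.support) {y : MvPolynomial σ R}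
    (hy : monomial e 1 * y ∈ Ideal.span ((fun s => monomial s (1 : R)) '' S)) :
    y ∈ Ideal.span ((fun s => monomial s (1 : R)) '' S) := by
  rw [mem_ideal_span_monomial_image] at hy ⊢
  intro x hx
  have hxe : x + e ∈ (monomial e 1 * y).support := by
    rwa [mem_support_iff, mul_comm, coeff_mul_monomial, mul_one, ← mem_support_iff]
  obtain ⟨s, hs, hle⟩ := hy _ hxe
  exact ⟨s, hs, Finsupp.le_of_le_add_of_disjoint (hdisj s hs) hle⟩

theorem X_mul_X_dvd_prod_X {a b : σ} (hab : a ≠ b) {t : Finset σ} (ha : a ∈ t) (hb : b ∈ t) :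
    (X a * X b : MvPolynomial σ R) ∣ ∏ j ∈ t, X j := by
  classical
  rw [← Finset.prod_pair hab]
  exact Finset.prod_dvd_prod_of_subset _ _ _ (Finset.insert_subset ha (by simpa using hb))

end MvPolynomial

theorem MvPolynomial.isRegSeq_monomial {σ : Type*} (R : Type*) [CommRing R] [Nontrivial R]
    {d : ℕ} (e : Fin d → σ →₀ ℕ) (he : ∀ i, e i ≠ 0)
    (hdisj : Pairwise (Disjoint on (fun i => (e i).support))) :
    IsRegSeq ((List.finRange d).map fun i => monomial (e i) (1 : R)) := by
  refine isRegSeq_map_finRange _ ?_ fun i y hy => ?_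
  · rw [← Set.image_univ, ← Set.image_image (fun s => monomial s (1 : R)) e]
    exact span_monomial_image_ne_top fun ⟨i, _, hi⟩ => he i hi
  · rw [← Set.image_image (fun s => monomial s (1 : R)) e] at hy ⊢
    refine mem_span_monomial_image_of_monomial_mul_mem ?_ hy
    rintro _ ⟨j, hj, rfl⟩
    exact hdisj (ne_of_lt hj)

section Corona

variable {V : Type*} (G : SimpleGraph V)

theorem corona_adj_inr_iff (i : V) (a : V ⊕ V) :
    (corona G).Adj (Sum.inr i) a ↔ a = Sum.inl i := by
  simp [corona]

theorem corona_adj_inl_inr_s8 (i : V) : (corona G).Adj (Sum.inl i) (Sum.inr i) := by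
  simp [corona]

end Corona

open scoped Classical in
theorem nbhdIdeal_corona {V : Type*} [Fintype V] (K : Type*) [Field K] (G : SimpleGraph V) :
    nbhdIdeal K (corona G) = Ideal.span (Set.range fun i => X (Sum.inl i) * X (Sum.inr i)) := by
  apply le_antisymm
  · rw [nbhdIdeal, Ideal.span_le]
    rintro _ ⟨v, rfl⟩
    obtain ⟨i, hl, hr⟩ : ∃ i, Sum.inl i ∈ insert v {w | (corona G).Adj v w} ∧
        Sum.inr i ∈ insert v {w | (corona G).Adj v w} := by
      rcases v with i | i
      · exact ⟨i, Set.mem_insert _ _, Or.inr (corona_adj_inl_inr_s8 G i)⟩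
      · exact ⟨i, Or.inr ((corona_adj_inr_iff G i _).2 rfl), Set.mem_insert _ _⟩
    exact Ideal.mem_of_dvd _ (X_mul_X_dvd_prod_X Sum.inl_ne_inr (by simpa using hl)
      (by simpa using hr)) (Ideal.subset_span ⟨i, rfl⟩)
  · rw [Ideal.span_le]
    rintro _ ⟨i, rfl⟩
    have hnbhd : (insert (Sum.inr i) {w | (corona G).Adj (Sum.inr i) w} : Set (V ⊕ V))
        = {Sum.inl i, Sum.inr i} := by
      ext w
      simp [corona_adj_inr_iff, or_comm]
    refine Ideal.subset_span ⟨Sum.inr i, ?_⟩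
    simp only [hnbhd, Set.toFinset_insert, Set.toFinset_singleton,
      Finset.prod_pair Sum.inl_ne_inr]

/-- The closed neighborhood ideal of the `K₁`-corona `H` of a graph `G` on `d` vertices
is a complete intersection: it is generated by the regular sequence
`X₁Y₁, X₂Y₂, …, X_dY_d`. -/
theorem stmt8 (d : ℕ) (K : Type*) [Field K] (G : SimpleGraph (Fin d)) :
    IsRegSeq ((List.finRange d).map fun i =>
      (MvPolynomial.X (Sum.inl i) * MvPolynomial.X (Sum.inr i) :
        MvPolynomial (Fin d ⊕ Fin d) K)) ∧
    nbhdIdeal K (corona G) =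
      Ideal.span {x | x ∈ (List.finRange d).map fun i =>
        (MvPolynomial.X (Sum.inl i) * MvPolynomial.X (Sum.inr i) :
          MvPolynomial (Fin d ⊕ Fin d) K)} := by
  refine ⟨?_, by rw [nbhdIdeal_corona, setOf_mem_map_finRange]⟩
  let e (i : Fin d) : Fin d ⊕ Fin d →₀ ℕ :=
    Finsupp.single (Sum.inl i) 1 + Finsupp.single (Sum.inr i) 1
  have hXY : (fun i => (X (Sum.inl i) * X (Sum.inr i) : MvPolynomial (Fin d ⊕ Fin d) K)) =
      fun i => monomial (e i) 1 := by
    funext i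
    simp only [e, X, monomial_mul, mul_one]
  rw [hXY]
  refine isRegSeq_monomial K e (fun i he => ?_) fun i j hij => ?_
  · simpa [e] using DFunLike.congr_fun he (Sum.inl i)
  · classical
    simp [onFun, e, Finsupp.support_single_add_single, hij.symm]
end

section
/- Let T be a finite tree with at least one edge that is domination-unmixed, and let {x_1y_1, ..., x_ky_k} be a matching of T of maximum size. Then for each i = 1,...,k, either x_i has degree 1 in T or y_i has degree 1 in T. -/
/-- `M` is a matching of `G`: a set of edges of `G` that pairwise share no vertex. -/
def IsMatching' {V : Type*} (G : SimpleGraph V) (M : Finset (Sym2 V)) : Prop :=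
  (∀ e ∈ M, e ∈ G.edgeSet) ∧
  ∀ e ∈ M, ∀ f ∈ M, e ≠ f → ∀ v : V, ¬(v ∈ e ∧ v ∈ f)

/-!
The two colour classes of a tree are independent, hence minimal, dominating sets, so in a
domination-unmixed tree on `n` vertices every dominating set has at least `n / 2` elements.
Choosing on each edge of a maximum matching `M` an endpoint adjacent to every unmatched
neighbour of the edge gives a dominating set of at most `|M|` vertices (there are no augmenting
paths of length one or three), so `M` is perfect. If some `xy ∈ M` had both endpoints of degree at least two, rooting the
tree at `x` and taking the endpoint nearer to `x` of every other edge of `M` would give a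
dominating set of size `n / 2 - 1`.
-/

open SimpleGraph Finset

section Domination

variable {V : Type*} {G : SimpleGraph V}

lemma IsDomSet.exists_isMinDomSet_subset {D : Finset V} (hD : IsDomSet G D) :
    ∃ D' ⊆ D, IsMinDomSet G D' := by
  obtain ⟨D', hle, hmin⟩ := exists_minimal_le_of_wellFoundedLT (IsDomSet G) D hD
  exact ⟨D', hle, hmin.prop, fun _ hsub hdom => hmin.eq_of_le hdom hsub⟩

lemma DomUnmixed.card_le (hG : DomUnmixed G) {A D : Finset V} (hA : IsMinDomSet G A)
    (hD : IsDomSet G D) : A.card ≤ D.card := by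
  obtain ⟨D', hsub, hD'⟩ := hD.exists_isMinDomSet_subset
  exact (hG A D' hA hD').trans_le (card_le_card hsub)

lemma IsDomSet.isMinDomSet_of_forall_not_adj {D : Finset V} (hD : IsDomSet G D)
    (hind : ∀ a ∈ D, ∀ b ∈ D, ¬G.Adj a b) : IsMinDomSet G D :=
  ⟨hD, fun _ hsub hD' => hsub.antisymm fun v hv =>
    (hD' v).resolve_right fun ⟨u, hu, huv⟩ => hind u (hsub hu) v hv huv⟩

lemma isMinDomSet_filter_coloring_eq [Fintype V] (C : G.Coloring (Fin 2))
    (hG : ∀ v, ∃ w, G.Adj v w) (i : Fin 2) : IsMinDomSet G {v | C v = i} := by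
  refine IsDomSet.isMinDomSet_of_forall_not_adj (fun v => ?_) fun a ha b hb hab => ?_
  · by_cases hv : C v = i
    · exact .inl (by simpa using hv)
    · obtain ⟨w, hvw⟩ := hG v
      have := C.valid hvw
      exact .inr ⟨w, by simp only [mem_filter, mem_univ, true_and]; omega, hvw.symm⟩
  · simp only [mem_filter, mem_univ, true_and] at ha hb
    exact C.valid hab (ha.trans hb.symm)

lemma DomUnmixed.card_le_two_mul_card [Fintype V] (hG : DomUnmixed G) (hcol : G.Colorable 2)
    (hnbr : ∀ v, ∃ w, G.Adj v w) {D : Finset V} (hD : IsDomSet G D) :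
    Fintype.card V ≤ 2 * D.card := by
  obtain ⟨C⟩ := hcol
  have hclasses : (univ.filter fun v => C v = 0).card + (univ.filter fun v => C v = 1).card =
      Fintype.card V := by
    have hcompl : univ.filter (fun v => C v = 1) = univ.filter (fun v => ¬C v = 0) :=
      filter_congr fun v _ => by omega
    rw [hcompl, card_filter_add_card_filter_not, card_univ]
  have h0 := hG.card_le (isMinDomSet_filter_coloring_eq C hnbr 0) hD
  have h1 := hG.card_le (isMinDomSet_filter_coloring_eq C hnbr 1) hD
  omega

end Domination

section Matching

variable {V : Type*} {G : SimpleGraph V} {M : Finset (Sym2 V)}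

def Saturates (M : Finset (Sym2 V)) (v : V) : Prop := ∃ f ∈ M, v ∈ f

def IsMaxMatching' (G : SimpleGraph V) (M : Finset (Sym2 V)) : Prop :=
  IsMatching' G M ∧ ∀ M' : Finset (Sym2 V), IsMatching' G M' → M'.card ≤ M.card

namespace IsMatching'

lemma adj (hM : IsMatching' G M) {a b : V} (hab : s(a, b) ∈ M) : G.Adj a b := hM.1 _ hab

lemma eq_of_mem_of_mem (hM : IsMatching' G M) {f g : Sym2 V} (hf : f ∈ M) (hg : g ∈ M) {v : V}
    (hvf : v ∈ f) (hvg : v ∈ g) : f = g := by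
  by_contra hfg
  exact hM.2 f hf g hg hfg v ⟨hvf, hvg⟩

lemma insert [DecidableEq V] (hM : IsMatching' G M) {e : Sym2 V} (he : e ∈ G.edgeSet)
    (hdisj : ∀ f ∈ M, ∀ v ∈ e, v ∉ f) :
    IsMatching' G (insert e M) ∧ (insert e M).card = M.card + 1 := by
  have heM : e ∉ M := fun heM => hdisj e heM _ e.out_fst_mem e.out_fst_mem
  refine ⟨⟨fun f hf => ?_, fun f hf g hg hfg v ⟨hvf, hvg⟩ => ?_⟩,
    card_insert_of_notMem heM⟩
  · rcases mem_insert.1 hf with rfl | hf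
    exacts [he, hM.1 f hf]
  · rcases mem_insert.1 hf with rfl | hfM <;> rcases mem_insert.1 hg with rfl | hgM
    · exact hfg rfl
    · exact hdisj g hgM v hvf hvg
    · exact hdisj f hfM v hvg hvf
    · exact hM.2 f hfM g hgM hfg v ⟨hvf, hvg⟩

lemma card_biUnion_toFinset [DecidableEq V] (hM : IsMatching' G M) :
    (M.biUnion Sym2.toFinset).card = 2 * M.card := by
  rw [card_biUnion fun f hf g hg hfg => disjoint_left.2 fun v hvf hvg =>
      hM.2 f hf g hg hfg v ⟨Sym2.mem_toFinset.1 hvf, Sym2.mem_toFinset.1 hvg⟩,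
    sum_congr rfl fun f hf => Sym2.card_toFinset_of_not_isDiag f
      (G.not_isDiag_of_mem_edgeSet (hM.1 f hf)), sum_const, smul_eq_mul, mul_comm]

lemma two_mul_card_le [Fintype V] (hM : IsMatching' G M) : 2 * M.card ≤ Fintype.card V := by
  classical
  exact hM.card_biUnion_toFinset ▸ card_le_univ _

lemma saturates_of_card_le [Fintype V] (hM : IsMatching' G M)
    (hcard : Fintype.card V ≤ 2 * M.card) (v : V) : Saturates M v := by
  classical
  have huniv : M.biUnion Sym2.toFinset = univ :=
    eq_univ_of_card _ (le_antisymm (card_le_univ _) (hM.card_biUnion_toFinset ▸ hcard))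
  obtain ⟨f, hf, hvf⟩ := mem_biUnion.1 (huniv ▸ mem_univ v)
  exact ⟨f, hf, Sym2.mem_toFinset.1 hvf⟩

end IsMatching'

namespace IsMaxMatching'

lemma not_adj_of_not_saturates (hM : IsMaxMatching' G M) {u w : V} (hu : ¬Saturates M u)
    (hw : ¬Saturates M w) : ¬G.Adj u w := by
  classical
  intro huw
  have hdisj : ∀ f ∈ M, ∀ v ∈ s(u, w), v ∉ f := by
    intro f hf v hv hvf
    rcases Sym2.mem_iff.1 hv with rfl | rfl
    exacts [hu ⟨f, hf, hvf⟩, hw ⟨f, hf, hvf⟩]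
  have := hM.2 _ (hM.1.insert huw hdisj).1
  rw [(hM.1.insert huw hdisj).2] at this
  omega

/-- There is no augmenting path `u a b w` of length three. -/
lemma not_adj_of_adj (hM : IsMaxMatching' G M) {a b u w : V} (hab : s(a, b) ∈ M)
    (hu : ¬Saturates M u) (hw : ¬Saturates M w) (huw : u ≠ w) (hua : G.Adj u a) :
    ¬G.Adj w b := by
  classical
  intro hwb
  set M₀ := M.erase s(a, b)
  have hM₀ : IsMatching' G M₀ := ⟨fun f hf => hM.1.1 f (mem_of_mem_erase hf),
    fun f hf g hg => hM.1.2 f (mem_of_mem_erase hf) g (mem_of_mem_erase hg)⟩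
  have hab_not_mem : ∀ f ∈ M₀, a ∉ f ∧ b ∉ f := fun f hf =>
    ⟨fun haf => ne_of_mem_erase hf (hM.1.eq_of_mem_of_mem (mem_of_mem_erase hf) hab haf
      (Sym2.mem_mk_left a b)),
     fun hbf => ne_of_mem_erase hf (hM.1.eq_of_mem_of_mem (mem_of_mem_erase hf) hab hbf
      (Sym2.mem_mk_right a b))⟩
  have h₁ := hM₀.insert hwb fun f hf v hv hvf => by
    rcases Sym2.mem_iff.1 hv with rfl | rfl
    exacts [hw ⟨f, mem_of_mem_erase hf, hvf⟩, (hab_not_mem f hf).2 hvf]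
  have h₂ := h₁.1.insert hua fun f hf v hv hvf => by
    rcases mem_insert.1 hf with rfl | hf
    · have ha : Saturates M a := ⟨_, hab, Sym2.mem_mk_left a b⟩
      have hb : Saturates M b := ⟨_, hab, Sym2.mem_mk_right a b⟩
      rcases Sym2.mem_iff.1 hv with rfl | rfl <;> rcases Sym2.mem_iff.1 hvf with h | h
      exacts [huw h, hu (h ▸ hb), hw (h ▸ ha), (hM.1.adj hab).ne h]
    · rcases Sym2.mem_iff.1 hv with rfl | rfl
      exacts [hu ⟨f, mem_of_mem_erase hf, hvf⟩, (hab_not_mem f hf).1 hvf]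
  have := hM.2 _ h₂.1
  rw [h₂.2, h₁.2, card_erase_of_mem hab] at this
  have := card_pos.2 ⟨_, hab⟩
  omega

lemma exists_mem_forall_adj (hM : IsMaxMatching' G M) {f : Sym2 V} (hf : f ∈ M) :
    ∃ p ∈ f, ∀ u, ¬Saturates M u → ∀ q ∈ f, G.Adj u q → G.Adj u p := by
  induction f using Sym2.ind with | h a b => ?_
  by_cases ha : ∃ u₀, ¬Saturates M u₀ ∧ G.Adj u₀ a
  · obtain ⟨u₀, hu₀, hu₀a⟩ := ha
    refine ⟨a, Sym2.mem_mk_left a b, fun u hu q hq huq => ?_⟩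
    rcases Sym2.mem_iff.1 hq with rfl | rfl
    · exact huq
    · by_cases h : u₀ = u
      · exact h ▸ hu₀a
      · exact absurd huq (hM.not_adj_of_adj hf hu₀ hu h hu₀a)
  · refine ⟨b, Sym2.mem_mk_right a b, fun u hu q hq huq => ?_⟩
    rcases Sym2.mem_iff.1 hq with rfl | rfl
    · exact absurd ⟨u, hu, huq⟩ ha
    · exact huq

lemma exists_isDomSet_card_le (hM : IsMaxMatching' G M) (hnbr : ∀ v, ∃ w, G.Adj v w) :
    ∃ D : Finset V, IsDomSet G D ∧ D.card ≤ M.card := by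
  classical
  choose p hpf hpadj using fun f (hf : f ∈ M) => hM.exists_mem_forall_adj hf
  have hpD (f : Sym2 V) (hf : f ∈ M) : p f hf ∈ M.attach.image fun g => p g.1 g.2 :=
    mem_image_of_mem _ (mem_attach M ⟨f, hf⟩)
  refine ⟨M.attach.image fun g => p g.1 g.2, fun v => ?_, card_image_le.trans card_attach.le⟩
  by_cases hv : Saturates M v
  · obtain ⟨f, hf, hvf⟩ := hv
    by_cases hpv : p f hf = v
    · exact .inl (hpv ▸ hpD f hf)
    · exact .inr ⟨p f hf, hpD f hf,
        adj_iff_exists_edge.2 ⟨hpv, f, hM.1.1 f hf, hpf f hf, hvf⟩⟩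
  · obtain ⟨w, hvw⟩ := hnbr v
    obtain ⟨f, hf, hwf⟩ : Saturates M w :=
      not_not.1 fun hw => hM.not_adj_of_not_saturates hv hw hvw
    exact .inr ⟨p f hf, hpD f hf, (hpadj f hf v hv w hwf hvw).symm⟩

end IsMaxMatching'

end Matching

section Tree

variable {V : Type*}

lemma SimpleGraph.exists_adj_ne_of_degree_ne_one {G : SimpleGraph V} [G.LocallyFinite]
    {x y : V} (hxy : G.Adj x y) (hx : G.degree x ≠ 1) : ∃ u, G.Adj x u ∧ u ≠ y := by
  by_contra! h
  exact hx (degree_eq_one_iff_existsUnique_adj.2 ⟨y, hxy, h⟩)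

lemma SimpleGraph.exists_nearer_endpoint_choice (G : SimpleGraph V) (r : V) :
    ∃ p : Sym2 V → V, ∀ a b, G.dist r a < G.dist r b → p s(a, b) = a := by
  classical
  have hnear (f : Sym2 V) : ∃ a ∈ f, ∀ b ∈ f, G.dist r a ≤ G.dist r b := by
    obtain ⟨a, ha, hmin⟩ :=
      f.toFinset.exists_min_image (G.dist r) ⟨_, Sym2.mem_toFinset.2 f.out_fst_mem⟩
    exact ⟨a, Sym2.mem_toFinset.1 ha, fun b hb => hmin b (Sym2.mem_toFinset.2 hb)⟩
  choose p hpf hpmin using hnear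
  refine ⟨p, fun a b hab => ?_⟩
  rcases Sym2.mem_iff.1 (hpf s(a, b)) with h | h
  · exact h
  · have := hpmin s(a, b) a (Sym2.mem_mk_left a b)
    rw [h] at this
    omega

namespace SimpleGraph.IsTree

variable {T : SimpleGraph V}

lemma eq_of_adj_of_dist_add_one (hT : T.IsTree) (r : V) {a b c : V} (ha : T.Adj a c)
    (hb : T.Adj b c) (hda : T.dist r a + 1 = T.dist r c)
    (hdb : T.dist r b + 1 = T.dist r c) : a = b := by
  obtain ⟨p, hp⟩ := hT.connected.exists_walk_length_eq_dist r a
  obtain ⟨q, hq⟩ := hT.connected.exists_walk_length_eq_dist r b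
  have hpc : (p.concat ha).IsPath := (p.concat ha).isPath_of_length_eq_dist (by simp [hp, hda])
  have hqc : (q.concat hb).IsPath := (q.concat hb).isPath_of_length_eq_dist (by simp [hq, hdb])
  obtain ⟨hab, -⟩ := Walk.concat_inj
    (congrArg Subtype.val ((hT.isAcyclic.subsingleton_path r c).elim ⟨_, hpc⟩ ⟨_, hqc⟩))
  exact hab

lemma dist_lt_of_adj_of_ne (hT : T.IsTree) (r : V) {v c z : V} (hvc : T.Adj v c)
    (hcz : T.Adj c z) (hdist : T.dist r v + 1 = T.dist r c) (hzv : z ≠ v) :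
    T.dist r c < T.dist r z := by
  rcases hT.dist_eq_dist_add_one_of_adj r hcz with h | h
  · exact absurd (hT.eq_of_adj_of_dist_add_one r hcz.symm hvc h.symm hdist) hzv
  · omega

variable {M : Finset (Sym2 V)} {x y : V}

lemma mem_image_erase_of_adj [DecidableEq V] (hT : T.IsTree) (hM : IsMatching' T M)
    (hperf : ∀ v, Saturates M v) (hxy : s(x, y) ∈ M) {p : Sym2 V → V}
    (hp : ∀ a b, T.dist x a < T.dist x b → p s(a, b) = a) {v c : V} (hv : v ∈ s(x, y))
    (hvc : T.Adj v c) (hc : c ∉ s(x, y)) : c ∈ (M.erase s(x, y)).image p := by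
  obtain ⟨g, hg, hcg⟩ := hperf c
  obtain ⟨z, rfl⟩ := Sym2.mem_iff_exists.1 hcg
  have hgxy : s(c, z) ≠ s(x, y) := fun h => hc (h ▸ hcg)
  have hzv : z ≠ v := by
    rintro rfl
    exact hgxy (hM.eq_of_mem_of_mem hg hxy (Sym2.mem_mk_right c z) hv)
  have hdist : T.dist x v + 1 = T.dist x c := by
    rcases Sym2.mem_iff.1 hv with rfl | rfl
    · simp [dist_eq_one_iff_adj.2 hvc]
    · rcases hT.dist_eq_dist_add_one_of_adj x hvc with h | h
      · have hxv : T.dist x v = 1 := dist_eq_one_iff_adj.2 (hM.adj hxy)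
        have hxc : x = c := hT.connected.dist_eq_zero_iff.1 (by omega)
        exact absurd (hxc ▸ Sym2.mem_mk_left x v) hc
      · exact h.symm
  rw [← hp c z (hT.dist_lt_of_adj_of_ne x hvc (hM.adj hg) hdist hzv)]
  exact mem_image_of_mem p (mem_erase.2 ⟨hgxy, hg⟩)

/-- Rooting the tree at `x`, the nearer endpoints of the matching edges other than `xy`
dominate: every vertex is one of them or the child of one, and `x`, `y` are dominated by
a child of theirs. -/
lemma exists_isDomSet_card_lt (hT : T.IsTree) (hM : IsMatching' T M)
    (hperf : ∀ v, Saturates M v) (hxy : s(x, y) ∈ M) (hx : ∃ u, T.Adj x u ∧ u ≠ y)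
    (hy : ∃ w, T.Adj y w ∧ w ≠ x) : ∃ D : Finset V, IsDomSet T D ∧ D.card < M.card := by
  classical
  obtain ⟨p, hp⟩ := T.exists_nearer_endpoint_choice x
  refine ⟨(M.erase s(x, y)).image p, fun v => ?_,
    card_image_le.trans_lt (card_erase_lt_of_mem hxy)⟩
  obtain ⟨f, hf, hvf⟩ := hperf v
  obtain ⟨z, rfl⟩ := Sym2.mem_iff_exists.1 hvf
  by_cases hfxy : s(v, z) = s(x, y)
  · have hv : v ∈ s(x, y) := hfxy ▸ hvf
    obtain ⟨c, hvc, hc⟩ : ∃ c, T.Adj v c ∧ c ∉ s(x, y) := by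
      rcases Sym2.mem_iff.1 hv with rfl | rfl
      · obtain ⟨u, hvu, huy⟩ := hx
        exact ⟨u, hvu, by simp [hvu.ne', huy]⟩
      · obtain ⟨w, hvw, hwx⟩ := hy
        exact ⟨w, hvw, by simp [hvw.ne', hwx]⟩
    exact .inr ⟨c, hT.mem_image_erase_of_adj hM hperf hxy hp hv hvc hc, hvc.symm⟩
  · have hfD : p s(v, z) ∈ (M.erase s(x, y)).image p :=
      mem_image_of_mem p (mem_erase.2 ⟨hfxy, hf⟩)
    rcases hT.dist_eq_dist_add_one_of_adj x (hM.adj hf) with h | h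
    · rw [Sym2.eq_swap (a := v), hp z v (by omega)] at hfD
      exact .inr ⟨z, hfD, (hM.adj hf).symm⟩
    · rw [hp v z (by omega)] at hfD
      exact .inl hfD

end SimpleGraph.IsTree

end Tree

theorem stmt15_general {V : Type*} [Fintype V] (T : SimpleGraph V) [DecidableRel T.Adj]
    (hT : T.IsTree) (hunm : DomUnmixed T)
    (M : Finset (Sym2 V)) (hM : IsMatching' T M)
    (hmax : ∀ M' : Finset (Sym2 V), IsMatching' T M' → M'.card ≤ M.card) :
    ∀ e ∈ M, ∃ x y : V, e = s(x, y) ∧ (T.degree x = 1 ∨ T.degree y = 1) := by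
  intro e he
  induction e using Sym2.ind with | h x y => ?_
  refine ⟨x, y, rfl, ?_⟩
  by_contra! hdeg
  have hxy : T.Adj x y := hM.adj he
  have : Nontrivial V := ⟨⟨x, y, hxy.ne⟩⟩
  have hnbr := hT.connected.preconnected.exists_adj_of_nontrivial
  obtain ⟨D₁, hD₁, hD₁M⟩ := IsMaxMatching'.exists_isDomSet_card_le ⟨hM, hmax⟩ hnbr
  have hperf := hM.saturates_of_card_le
    ((hunm.card_le_two_mul_card hT.colorable_two hnbr hD₁).trans (by omega))
  obtain ⟨D₂, hD₂, hD₂M⟩ := hT.exists_isDomSet_card_lt hM hperf he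
    (exists_adj_ne_of_degree_ne_one hxy hdeg.1) (exists_adj_ne_of_degree_ne_one hxy.symm hdeg.2)
  have := hunm.card_le_two_mul_card hT.colorable_two hnbr hD₂
  have := hM.two_mul_card_le
  omega

/-- In a domination-unmixed finite tree with at least one edge, every edge of a maximum
matching has an endpoint of degree one. -/
theorem stmt15 {V : Type*} [Fintype V] (T : SimpleGraph V) [DecidableRel T.Adj]
    (hT : T.IsTree) (hE : T.edgeSet.Nonempty) (hunm : DomUnmixed T)
    (M : Finset (Sym2 V)) (hM : IsMatching' T M)
    (hmax : ∀ M' : Finset (Sym2 V), IsMatching' T M' → M'.card ≤ M.card) :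
    ∀ e ∈ M, ∃ x y : V, e = s(x, y) ∧ (T.degree x = 1 ∨ T.degree y = 1) :=
  stmt15_general T hT hunm M hM hmax
end
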